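/- Let k ≥ 1 be an integer and ε ∈ {1, −1}. Let p be a prime not dividing 2k+1, let n be an odd positive integer such that 2 is not a square in ℤ/pℤ, and suppose that for some (equivalently, any) primitive (2k+1)-th root of unity ζ in an algebraic closure of 𝔽_{p^n}, the element ζ^{i} + ζ^{−i} does not lie in (the image of) 𝔽_{p^n} for every 1 ≤ i ≤ k. Then the map PSL₂(𝔽_{p^n}) × PSL₂(𝔽_{p^n}) → PSL₂(𝔽_{p^n}) given by (x, y) ↦ x² · (x²·y·x^{2ε}·y⁻¹)^{k} is not surjective. -/

import Mathlib

open scoped MatrixGroups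

/-!
Lift a preimage of the class of `!![0, -1; 1, 0]` to `SL₂`: the word
`W = x² (x² y x^{2ε} y⁻¹)ᵏ` then has trace `0`. With `A = x²`, `C = y x^{2ε} y⁻¹` (so that
`tr C = tr A = (tr x)² - 2`) and `B = A C`, the Cayley–Hamilton relation `B² = (tr B) B - 1`
expresses the powers of `B` through the rescaled Chebyshev polynomials `Sⱼ`, and
`tr W = ((tr x)² - 2) · (Sₖ - Sₖ₋₁)(tr B)`.
The first factor vanishes only if `2` is a square in `𝔽_{p^n}`, hence (as `n` is odd) in `𝔽_p`.
For the second, write `tr B = λ + λ⁻¹` in the algebraic closure. Then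
`(Sₖ - Sₖ₋₁)(λ + λ⁻¹) · (λ + 1) λᵏ = λ^{2k+1} + 1`, so `-λ` is a `(2k+1)`-th root of unity `ζⁱ`,
nontrivial because `(Sₖ - Sₖ₋₁)(-2) = ±(2k+1) ≠ 0`, and `-tr B = ζⁱ + ζ⁻ⁱ` would lie in `𝔽_{p^n}`.
-/

open Polynomial Polynomial.Chebyshev

theorem Nat.pow_mod_eight_of_odd {p n : ℕ} (hp : Odd p) (hn : Odd n) : p ^ n % 8 = p % 8 := by
  obtain ⟨m, rfl⟩ := hn
  have hsq : p ^ 2 ≡ 1 [MOD 8] := by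
    have := Nat.mod_lt p (by norm_num : 8 > 0)
    have hp2 := Nat.odd_iff.mp hp
    unfold Nat.ModEq
    rw [Nat.pow_mod]
    interval_cases h : p % 8 <;> omega
  calc p ^ (2 * m + 1) % 8 = (p ^ 2) ^ m * p % 8 := by ring_nf
    _ = 1 ^ m * p % 8 := (hsq.pow m).mul_right p
    _ = p % 8 := by rw [one_pow, one_mul]

theorem FiniteField.isSquare_two_iff_of_card_eq_pow {F : Type*} [Field F] [Finite F]
    {p n : ℕ} [Fact p.Prime] (hF : Nat.card F = p ^ n) (hn : Odd n) :
    IsSquare (2 : F) ↔ IsSquare (2 : ZMod p) := by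
  have := Fintype.ofFinite F
  rw [FiniteField.isSquare_two_iff, FiniteField.isSquare_two_iff, ZMod.card,
    Fintype.card_eq_nat_card, hF]
  rcases Nat.even_or_odd p with hp | hp
  · have hpn := Nat.even_iff.mp (hp.pow_of_ne_zero hn.pos.ne')
    have := Nat.even_iff.mp hp
    omega
  · rw [Nat.pow_mod_eight_of_odd hp hn]

section Chebyshev

variable {K : Type*} [Field K]

theorem Polynomial.Chebyshev.S_sub_S_eval_add_inv {x : K} (hx : x ≠ 0) (k : ℕ) :
    ((S K k).eval (x + x⁻¹) - (S K (k - 1)).eval (x + x⁻¹)) * (x + 1) * x ^ k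
      = x ^ (2 * k + 1) + 1 := by
  induction k using Nat.twoStepInduction with
  | zero => simp
  | one =>
    simp only [Nat.cast_one, S_one, S_zero, sub_self, eval_X, eval_one, pow_one]
    field_simp
    ring
  | more k ih1 ih2 =>
    push_cast at ih1 ih2 ⊢
    rw [show (k : ℤ) + 2 - 1 = k + 1 by ring, S_add_two]
    rw [show (k : ℤ) + 1 - 1 = k by ring] at ih2
    have hrec := congrArg (eval (x + x⁻¹)) (S_add_one K k)
    simp only [eval_sub, eval_mul, eval_X] at ih1 ih2 hrec ⊢
    linear_combination (x + x⁻¹) * x * ih2 - x ^ 2 * ih1 - (x + 1) * x ^ (k + 2) * hrec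
      + (x ^ (2 * k + 3) + 1) * mul_inv_cancel₀ hx

theorem Polynomial.Chebyshev.S_sub_S_eval_neg_two (k : ℕ) :
    (S K k).eval (-2) - (S K (k - 1)).eval (-2) = (k : ℤ).negOnePow * (2 * k + 1 : K) := by
  rw [S_eval_neg_two, S_eval_neg_two, Int.negOnePow_sub, Int.negOnePow_one]
  push_cast
  ring

theorem IsAlgClosed.exists_add_inv_eq [IsAlgClosed K] (b : K) : ∃ x ≠ 0, x + x⁻¹ = b := by
  have hdeg : (C 1 * X ^ 2 + C (-b) * X + C 1 : K[X]).degree ≠ 0 := by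
    rw [degree_quadratic one_ne_zero]
    decide
  obtain ⟨x, hx⟩ := IsAlgClosed.exists_root _ hdeg
  simp only [IsRoot, eval_add, eval_mul, eval_pow, eval_C, eval_X] at hx
  have hx0 : x ≠ 0 := by rintro rfl; simp at hx
  refine ⟨x, hx0, ?_⟩
  field_simp
  linear_combination hx

theorem IsPrimitiveRoot.exists_add_inv_eq_zpow_add_zpow_neg {ζ μ : K} {k : ℕ}
    (hζ : IsPrimitiveRoot ζ (2 * k + 1)) (hμ : μ ^ (2 * k + 1) = 1) (hμ1 : μ ≠ 1) :
    ∃ i ∈ Finset.Icc 1 k, μ + μ⁻¹ = ζ ^ (i : ℤ) + ζ ^ (-(i : ℤ)) := by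
  obtain ⟨j, hj, rfl⟩ := hζ.eq_pow_of_pow_eq_one hμ
  have hj0 : j ≠ 0 := by rintro rfl; exact hμ1 (pow_zero ζ)
  rcases le_or_gt j k with hjk | hjk
  · exact ⟨j, Finset.mem_Icc.mpr ⟨by omega, hjk⟩, by simp [zpow_neg]⟩
  · refine ⟨2 * k + 1 - j, Finset.mem_Icc.mpr ⟨by omega, by omega⟩, ?_⟩
    have hζ0 : ζ ≠ 0 := hζ.ne_zero (by omega)
    rw [Nat.cast_sub hj.le, zpow_sub₀ hζ0, neg_sub, zpow_sub₀ hζ0]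
    simp only [zpow_natCast, hζ.pow_eq_one]
    ring

theorem IsPrimitiveRoot.exists_neg_eq_zpow_add_zpow_neg_of_S_sub_S_eval_eq_zero [IsAlgClosed K]
    {ζ : K} {k : ℕ} (hζ : IsPrimitiveRoot ζ (2 * k + 1)) {b : K}
    (hb : (S K k).eval b - (S K (k - 1)).eval b = 0) :
    ∃ i ∈ Finset.Icc 1 k, -b = ζ ^ (i : ℤ) + ζ ^ (-(i : ℤ)) := by
  obtain ⟨x, hx0, rfl⟩ := IsAlgClosed.exists_add_inv_eq b
  have hpow : (-x) ^ (2 * k + 1) = 1 := by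
    have := S_sub_S_eval_add_inv hx0 k
    rw [hb, zero_mul, zero_mul] at this
    rw [Odd.neg_pow ⟨k, rfl⟩]
    linear_combination this
  have hx1 : -x ≠ 1 := by
    intro h
    rw [show x = -1 by linear_combination -h] at hb
    rw [show (-1 : K) + (-1)⁻¹ = -2 by norm_num, S_sub_S_eval_neg_two] at hb
    have := hζ.neZero'
    exact NeZero.ne ((2 * k + 1 : ℕ) : K) (by simpa using hb)
  obtain ⟨i, hi, h⟩ := hζ.exists_add_inv_eq_zpow_add_zpow_neg hpow hx1
  exact ⟨i, hi, by rw [← h, inv_neg]; ring⟩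

end Chebyshev

namespace Matrix.SpecialLinearGroup

variable {R : Type*} [CommRing R]

section

variable {n : Type*} [Fintype n] [DecidableEq n]

theorem trace_coe_conj (Y D : SpecialLinearGroup n R) :
    trace (↑(Y * D * Y⁻¹) : Matrix n n R) = trace (D : Matrix n n R) := by
  rw [coe_mul, coe_mul, trace_mul_cycle, ← coe_mul, inv_mul_cancel, coe_one, one_mul]

theorem trace_coe_eq_zero_of_mk_eq {g h : SpecialLinearGroup n R}
    (hgh : (g : ProjectiveSpecialLinearGroup n R) = h) (hg : trace (g : Matrix n n R) = 0) :
    trace (h : Matrix n n R) = 0 := by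
  obtain ⟨r, -, hr⟩ := mem_center_iff.mp (QuotientGroup.eq.mp hgh)
  have hh : (h : Matrix n n R) = g * (g⁻¹ * h : SpecialLinearGroup n R) := by
    rw [← coe_mul, mul_inv_cancel_left]
  rw [hh, ← hr, trace_mul_comm, scalar_apply, ← smul_eq_diagonal_mul, trace_smul, hg, smul_zero]

end

local notation:1024 "↑ₘ" A:1024 => ((A : SL(2, R)) : Matrix (Fin 2) (Fin 2) R)

theorem coe_mul_self_fin_two (A : SL(2, R)) : ↑ₘA * ↑ₘA = trace ↑ₘA • ↑ₘA - 1 := by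
  have h := A.det_coe
  rw [det_fin_two] at h
  ext i j
  fin_cases i <;> fin_cases j <;>
    simp only [Fin.zero_eta, Fin.mk_one, Fin.isValue, mul_apply, Fin.sum_univ_two, trace_fin_two,
      sub_apply, smul_apply, smul_eq_mul, one_apply_eq, one_apply_ne, ne_eq, zero_ne_one,
      one_ne_zero, not_false_eq_true, sub_zero] <;>
    first | linear_combination -h | linear_combination

theorem trace_coe_inv_fin_two (A : SL(2, R)) : trace ↑ₘ(A⁻¹) = trace ↑ₘA := by
  simp [coe_inv, adjugate_fin_two, trace_fin_two, add_comm]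

theorem trace_coe_sq_fin_two (A : SL(2, R)) : trace ↑ₘ(A ^ 2) = trace ↑ₘA ^ 2 - 2 := by
  rw [sq, coe_mul, coe_mul_self_fin_two]
  simp [trace_sub, sq]

theorem coe_pow_fin_two (B : SL(2, R)) (k : ℕ) :
    ↑ₘ(B ^ k) = (S R (k - 1)).eval (trace ↑ₘB) • ↑ₘB - (S R (k - 2)).eval (trace ↑ₘB) • 1 := by
  induction k with
  | zero => simp
  | succ k ih =>
    have hrec := congrArg (eval (trace ↑ₘB)) (S_eq R k)
    simp only [eval_sub, eval_mul, eval_X] at hrec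
    rw [pow_succ, coe_mul, ih, sub_mul, smul_mul_assoc, smul_mul_assoc, coe_mul_self_fin_two,
      one_mul]
    push_cast
    rw [add_sub_cancel_right, show (k : ℤ) + 1 - 2 = k - 1 by ring, hrec]
    module

theorem trace_coe_mul_mul_pow_fin_two {A C : SL(2, R)} (hAC : trace ↑ₘC = trace ↑ₘA) (k : ℕ) :
    trace ↑ₘ(A * (A * C) ^ k)
      = trace ↑ₘA * ((S R k).eval (trace ↑ₘ(A * C)) - (S R (k - 1)).eval (trace ↑ₘ(A * C))) := by
  have htrAB : trace (↑ₘA * ↑ₘ(A * C)) = trace ↑ₘA * trace ↑ₘ(A * C) - trace ↑ₘA := by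
    rw [coe_mul, ← mul_assoc, coe_mul_self_fin_two, sub_mul, smul_mul_assoc, one_mul, trace_sub,
      trace_smul, smul_eq_mul, hAC]
  have hrec := congrArg (eval (trace ↑ₘ(A * C))) (S_eq R k)
  simp only [eval_sub, eval_mul, eval_X] at hrec
  rw [coe_mul (A := A), coe_pow_fin_two, mul_sub, mul_smul_comm, mul_smul_comm, mul_one,
    trace_sub, trace_smul, trace_smul, smul_eq_mul, smul_eq_mul, htrAB, hrec]
  ring

theorem trace_coe_sq_mul_pow_sq_mul_conj_zpow (X Y : SL(2, R)) {ε : ℤ} (hε : ε = 1 ∨ ε = -1)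
    (k : ℕ) :
    trace ↑ₘ(X ^ 2 * (X ^ 2 * Y * X ^ (2 * ε) * Y⁻¹) ^ k)
      = (trace ↑ₘX ^ 2 - 2) * ((S R k).eval (trace ↑ₘ(X ^ 2 * Y * X ^ (2 * ε) * Y⁻¹))
          - (S R (k - 1)).eval (trace ↑ₘ(X ^ 2 * Y * X ^ (2 * ε) * Y⁻¹))) := by
  have hC : trace ↑ₘ(Y * X ^ (2 * ε) * Y⁻¹) = trace ↑ₘ(X ^ 2) := by
    rw [trace_coe_conj]
    rcases hε with rfl | rfl
    · rfl
    · rw [show (2 : ℤ) * -1 = -(2 : ℕ) by norm_num, _root_.zpow_neg, zpow_natCast,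
        trace_coe_inv_fin_two]
  simp only [mul_assoc] at hC ⊢
  rw [trace_coe_mul_mul_pow_fin_two hC, trace_coe_sq_fin_two]

end Matrix.SpecialLinearGroup

theorem nonsurjective_word_map_psl2_finite_field_general
    (k : ℕ) (ε : ℤ) (hε : ε = 1 ∨ ε = -1)
    (p : ℕ) [Fact p.Prime] (n : ℕ)
    (hodd : Odd n)
    (h2 : ¬ IsSquare (2 : ZMod p))
    (ζ : AlgebraicClosure (GaloisField p n))
    (hζ : IsPrimitiveRoot ζ (2 * k + 1))
    (hnot : ∀ i ∈ Finset.Icc 1 k, ∀ c : GaloisField p n,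
      algebraMap (GaloisField p n) (AlgebraicClosure (GaloisField p n)) c
        ≠ ζ ^ (i : ℤ) + ζ ^ (-(i : ℤ))) :
    ¬ Function.Surjective
      (fun g : Matrix.ProjectiveSpecialLinearGroup (Fin 2) (GaloisField p n) ×
          Matrix.ProjectiveSpecialLinearGroup (Fin 2) (GaloisField p n) =>
        g.1 ^ 2 * (g.1 ^ 2 * g.2 * g.1 ^ (2 * ε) * g.2⁻¹) ^ k) := by
  intro hsurj
  let J : SL(2, GaloisField p n) := ⟨!![0, -1; 1, 0], by simp [Matrix.det_fin_two_of]⟩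
  obtain ⟨⟨x, y⟩, hxy⟩ := hsurj J
  obtain ⟨X, rfl⟩ := QuotientGroup.mk_surjective x
  obtain ⟨Y, rfl⟩ := QuotientGroup.mk_surjective y
  have hW := Matrix.SpecialLinearGroup.trace_coe_eq_zero_of_mk_eq
    (h := X ^ 2 * (X ^ 2 * Y * X ^ (2 * ε) * Y⁻¹) ^ k) (by rw [← hxy]; rfl)
    (by simp [J, Matrix.trace_fin_two])
  rw [Matrix.SpecialLinearGroup.trace_coe_sq_mul_pow_sq_mul_conj_zpow X Y hε, mul_eq_zero] at hW
  rcases hW with hX | hβ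
  · exact h2 ((FiniteField.isSquare_two_iff_of_card_eq_pow (GaloisField.card p n hodd.pos.ne')
      hodd).mp ⟨_, by linear_combination -hX⟩)
  · obtain ⟨i, hi, hi'⟩ := hζ.exists_neg_eq_zpow_add_zpow_neg_of_S_sub_S_eval_eq_zero
      (by simpa only [map_sub, map_zero, algebraMap_eval_S] using
        congrArg (algebraMap (GaloisField p n) (AlgebraicClosure (GaloisField p n))) hβ)
    exact hnot i hi _ (by rw [map_neg]; exact hi')

/-- Finite-field form of Theorem 3.1: if `p ∤ 2k+1`, `n` is odd, `2` is not a square mod `p`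
and `ζⁱ + ζ⁻ⁱ ∉ 𝔽_{p^n}` for a primitive `(2k+1)`-th root of unity `ζ` in an algebraic closure
of `𝔽_{p^n}` and all `1 ≤ i ≤ k`, then `(x, y) ↦ x²·(x²·y·x^{2ε}·y⁻¹)^k` is not surjective on
`PSL₂(𝔽_{p^n})`. -/
theorem nonsurjective_word_map_psl2_finite_field
    (k : ℕ) (hk : 1 ≤ k) (ε : ℤ) (hε : ε = 1 ∨ ε = -1)
    (p : ℕ) [Fact p.Prime] (n : ℕ) (hn : 0 < n)
    (hp : ¬ (p ∣ 2 * k + 1))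
    (hodd : Odd n)
    (h2 : ¬ IsSquare (2 : ZMod p))
    (ζ : AlgebraicClosure (GaloisField p n))
    (hζ : IsPrimitiveRoot ζ (2 * k + 1))
    (hnot : ∀ i ∈ Finset.Icc 1 k, ∀ c : GaloisField p n,
      algebraMap (GaloisField p n) (AlgebraicClosure (GaloisField p n)) c
        ≠ ζ ^ (i : ℤ) + ζ ^ (-(i : ℤ))) :
    ¬ Function.Surjective
      (fun g : Matrix.ProjectiveSpecialLinearGroup (Fin 2) (GaloisField p n) ×
          Matrix.ProjectiveSpecialLinearGroup (Fin 2) (GaloisField p n) =>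
        g.1 ^ 2 * (g.1 ^ 2 * g.2 * g.1 ^ (2 * ε) * g.2⁻¹) ^ k) :=
  nonsurjective_word_map_psl2_finite_field_general k ε hε p n hodd h2 ζ hζ hnot
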